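/- arXiv:2412.13672 — 2 statements merged into one kernel-verified Lean document; each statement's English description precedes it below -/
import Mathlib

section
/- Let G = (V, E, w) be a finite connected weighted graph with positive edge weights w_e. For t ≥ 0, let N(G, t) denote the number of connected components of the subgraph of G obtained by retaining only the edges e with w_e ≤ t. Then the weight W(G) of a minimum spanning tree of G satisfies W(G) = ∫₀^∞ (N(G,t) − 1) dt, and moreover the integrand vanishes for t ≥ max_{e∈E} w_e, so W(G) = ∫₀^{max_e w_e} (N(G,t) − 1) dt. -/
/-!
Fix a minimum spanning tree `T`. By the cycle property, an edge of `G` of weight `≤ t` joins two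
vertices that are already joined by edges of `T` of weight `≤ t`, so `G.sublevel w t` and
`T.sublevel w t` have the same components. The latter is a forest, hence has
`|V| - #{e ∈ T | w e ≤ t}` components, i.e. `N(G, t) - 1 = #{e ∈ T | t < w e}`. Integrating this
count over `t > 0` gives `∑_{e ∈ T} w e = W`.
-/

open MeasureTheory Finset

namespace SimpleGraph

variable {V : Type*}

theorem Reachable.of_sup_edge {H : SimpleGraph V} {a b x y : V}
    (h : (H ⊔ edge a b).Reachable x y) :
    H.Reachable x y ∨ (H.Reachable x a ∧ H.Reachable b y) ∨
      (H.Reachable x b ∧ H.Reachable a y) := by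
  obtain ⟨p⟩ := h
  induction p with
  | nil => exact Or.inl .rfl
  | cons hxz _ ih =>
    rw [sup_adj, edge_adj] at hxz
    rcases hxz with hxz | ⟨⟨rfl, rfl⟩ | ⟨rfl, rfl⟩, -⟩
    · have := hxz.reachable
      grind [Reachable.trans]
    · grind [Reachable.refl]
    · grind [Reachable.refl]

theorem card_connectedComponent_eq_of_reachable_eq {H K : SimpleGraph V}
    (h : H.Reachable = K.Reachable) :
    Nat.card H.ConnectedComponent = Nat.card K.ConnectedComponent :=
  Nat.card_congr (Quot.congrRight fun _ _ => h ▸ Iff.rfl)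

theorem card_connectedComponent_bot :
    Nat.card (⊥ : SimpleGraph V).ConnectedComponent = Nat.card V := by
  refine (Nat.card_eq_of_bijective (⊥ : SimpleGraph V).connectedComponentMk ⟨?_, ?_⟩).symm
  · exact fun _ _ h => reachable_bot.1 (ConnectedComponent.exact h)
  · exact Quot.mk_surjective

theorem card_connectedComponent_sup_edge [Finite V] {H : SimpleGraph V} {a b : V}
    (hab : ¬H.Reachable a b) :
    Nat.card H.ConnectedComponent = Nat.card (H ⊔ edge a b).ConnectedComponent + 1 := by
  classical
  set K := H ⊔ edge a b
  have hK : K.Adj a b := by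
    have hne : a ≠ b := fun h => hab (h ▸ .rfl)
    simp [K, edge_adj, hne]
  let f : {c : H.ConnectedComponent // c ≠ H.connectedComponentMk b} → K.ConnectedComponent :=
    fun c => c.1.map (Hom.ofLE le_sup_left)
  have hf : f.Bijective := by
    refine ⟨?_, ?_⟩
    · rintro ⟨⟨x⟩, hx⟩ ⟨⟨y⟩, hy⟩ hxy
      rcases (ConnectedComponent.exact hxy).of_sup_edge with h | ⟨-, h⟩ | ⟨h, -⟩
      · exact Subtype.ext (ConnectedComponent.sound h)
      · exact absurd (ConnectedComponent.sound h.symm) hy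
      · exact absurd (ConnectedComponent.sound h) hx
    · rintro ⟨z⟩
      by_cases hz : H.connectedComponentMk z = H.connectedComponentMk b
      · refine ⟨⟨H.connectedComponentMk a, fun h => hab (ConnectedComponent.exact h)⟩, ?_⟩
        exact ConnectedComponent.sound
          (hK.reachable.trans ((ConnectedComponent.exact hz.symm).mono le_sup_left))
      · exact ⟨⟨H.connectedComponentMk z, hz⟩, rfl⟩
  rw [← Nat.card_eq_of_bijective f hf, ← Finite.card_option,
    Nat.card_congr (Equiv.optionSubtypeNe (H.connectedComponentMk b))]

theorem IsAcyclic.card_connectedComponent_add_card_edgeSet [Finite V] {H : SimpleGraph V}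
    (hH : H.IsAcyclic) : Nat.card H.ConnectedComponent + Nat.card H.edgeSet = Nat.card V := by
  induction hn : Nat.card H.edgeSet generalizing H with
  | zero =>
    obtain rfl : H = ⊥ := edgeSet_eq_empty.1 ((Set.ncard_eq_zero).1 hn)
    rw [card_connectedComponent_bot, add_zero]
  | succ n ih =>
    obtain ⟨⟨a, b⟩, he⟩ := Set.nonempty_of_ncard_ne_zero (s := H.edgeSet)
      (by rw [← Nat.card_coe_set_eq, hn]; omega)
    set H' := H.deleteEdges {s(a, b)}
    have hnr : ¬H'.Reachable a b := isAcyclic_iff_forall_isBridge.1 hH he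
    have hH' : H = H' ⊔ edge a b := by
      ext x y
      simp only [H', sup_adj, deleteEdges_adj, edge_adj]
      grind [Adj.ne, mem_edgeSet, Adj.symm]
    have hn' : Nat.card H'.edgeSet = n := by
      rw [edgeSet_deleteEdges, Nat.card_coe_set_eq, Set.ncard_sdiff_singleton_of_mem he,
        ← Nat.card_coe_set_eq, hn, Nat.add_sub_cancel]
    have hH'card : Nat.card H'.ConnectedComponent + n = Nat.card V :=
      ih (hH.anti (deleteEdges_le _)) hn'
    have hcard := card_connectedComponent_sup_edge hnr
    rw [← hH'] at hcard
    omega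

theorem IsTree.isTree_sup_edge_deleteEdges [Finite V] {T : SimpleGraph V} (hT : T.IsTree)
    {u v : V} (huv : u ≠ v) (hnadj : ¬T.Adj u v) {p : T.Walk v u} (hp : p.IsPath)
    {f : Sym2 V} (hf : f ∈ p.edges) : ((T ⊔ edge u v).deleteEdges {f}).IsTree := by
  set H := T ⊔ edge u v
  have hadj : H.Adj u v := by simp [H, edge_adj, huv]
  have hcycle : (Walk.cons hadj (p.mapLe le_sup_left)).IsCycle := by
    rw [Walk.cons_isCycle_iff, Walk.edges_mapLe_eq_edges]
    exact ⟨hp.mapLe le_sup_left, fun h => hnadj (p.adj_of_mem_edges h)⟩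
  have hnb : ¬H.IsBridge f := fun hb => hb.notMem_edges_of_isCycle hcycle (by simp [hf])
  have hfH : f ∈ H.edgeSet := edgeSet_mono le_sup_left (p.edges_subset_edgeSet hf)
  have huvT : s(u, v) ∉ T.edgeSet := hnadj
  obtain ⟨x, y⟩ := f
  rw [isTree_iff_connected_and_card]
  refine ⟨(hT.connected.mono le_sup_left).connected_delete_edge_of_not_isBridge hnb, ?_⟩
  rw [edgeSet_deleteEdges, Nat.card_coe_set_eq, Set.ncard_sdiff_singleton_of_mem hfH,
    edgeSet_sup, edgeSet_edge_of_ne huv, Set.union_singleton, Set.ncard_insert_of_notMem huvT,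
    Nat.add_sub_cancel, ← Nat.card_coe_set_eq]
  exact (isTree_iff_connected_and_card.1 hT).2

section Sublevel

variable {α : Type*} [LE α]

def sublevel (G : SimpleGraph V) (w : Sym2 V → α) (t : α) : SimpleGraph V :=
  fromEdgeSet {e | e ∈ G.edgeSet ∧ w e ≤ t}

variable {G : SimpleGraph V} {w : Sym2 V → α} {t : α}

@[simp]
theorem sublevel_adj {u v : V} : (G.sublevel w t).Adj u v ↔ G.Adj u v ∧ w s(u, v) ≤ t := by
  simp only [sublevel, fromEdgeSet_adj, Set.mem_ofPred_eq, mem_edgeSet]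
  exact ⟨fun h => h.1, fun h => ⟨h, h.1.ne⟩⟩

theorem edgeSet_sublevel : (G.sublevel w t).edgeSet = {e | e ∈ G.edgeSet ∧ w e ≤ t} := by
  rw [sublevel, edgeSet_fromEdgeSet]
  exact sdiff_eq_left.2 (Set.disjoint_left.2 fun e he => G.not_isDiag_of_mem_edgeSet he.1)

theorem sublevel_le : G.sublevel w t ≤ G := fun _ _ huv => (sublevel_adj.1 huv).1

theorem sublevel_mono {G' : SimpleGraph V} (h : G ≤ G') : G.sublevel w t ≤ G'.sublevel w t :=
  fun _ _ huv => sublevel_adj.2 ⟨h (sublevel_adj.1 huv).1, (sublevel_adj.1 huv).2⟩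

end Sublevel

section MinSpanningTree

variable {α : Type*} [AddCommMonoid α] [LinearOrder α] [IsOrderedCancelAddMonoid α]

structure IsMinSpanningTree (G : SimpleGraph V) (w : Sym2 V → α) (T : SimpleGraph V) : Prop where
  le : T ≤ G
  isTree : T.IsTree
  minimal : ∀ T' ≤ G, T'.IsTree → ∑ᶠ e ∈ T.edgeSet, w e ≤ ∑ᶠ e ∈ T'.edgeSet, w e

variable {G T : SimpleGraph V} {w : Sym2 V → α} {t : α} [Finite V]

/-- Cycle property: otherwise `s(u, v)` could replace a heavier edge of the `T`-path from `v` to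
`u`, giving a lighter spanning tree. -/
theorem IsMinSpanningTree.reachable_sublevel (hT : G.IsMinSpanningTree w T) {u v : V}
    (huv : (G.sublevel w t).Adj u v) : (T.sublevel w t).Reachable u v := by
  obtain ⟨huv, hwt⟩ := sublevel_adj.1 huv
  by_contra hnr
  have hnadj : ¬T.Adj u v := fun h => hnr (sublevel_adj.2 ⟨h, hwt⟩).reachable
  obtain ⟨p, hp⟩ := hT.isTree.connected.preconnected.exists_isPath v u
  obtain ⟨f, hf, hwf⟩ : ∃ f ∈ p.edges, t < w f := by
    by_contra! hle
    refine hnr (Reachable.symm ⟨p.transfer _ fun e he => ?_⟩)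
    rw [edgeSet_sublevel]
    exact ⟨p.edges_subset_edgeSet he, hle e he⟩
  have hfT : f ∈ T.edgeSet := p.edges_subset_edgeSet hf
  set T' := (T ⊔ edge u v).deleteEdges {f}
  have hT'G : T' ≤ G := (deleteEdges_le _).trans (sup_le hT.le ((edge_le_iff _).2 (Or.inr huv)))
  have hweight : ∑ᶠ e ∈ T'.edgeSet, w e + w f = ∑ᶠ e ∈ T.edgeSet, w e + w s(u, v) := by
    have hfT' : {f} ⊆ insert s(u, v) T.edgeSet := Set.singleton_subset_iff.2 (.inr hfT)
    have huvT : s(u, v) ∉ T.edgeSet := hnadj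
    rw [edgeSet_deleteEdges, edgeSet_sup, edgeSet_edge_of_ne huv.ne, Set.union_singleton,
      add_comm, ← finsum_mem_singleton (f := w) (a := f),
      finsum_mem_add_sdiff hfT' (Set.toFinite _), finsum_mem_insert w huvT (Set.toFinite _),
      add_comm]
  have hle := hT.minimal T' hT'G (hT.isTree.isTree_sup_edge_deleteEdges huv.ne hnadj hp hf)
  have hlt : ∑ᶠ e ∈ T.edgeSet, w e + w s(u, v) < ∑ᶠ e ∈ T.edgeSet, w e + w f := by
    gcongr
    exact hwt.trans_lt hwf
  rw [← hweight] at hlt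
  exact hlt.not_ge (by gcongr)

theorem IsMinSpanningTree.reachable_sublevel_eq (hT : G.IsMinSpanningTree w T) (t : α) :
    (T.sublevel w t).Reachable = (G.sublevel w t).Reachable := by
  refine le_antisymm (fun _ _ h => h.mono (sublevel_mono hT.le)) ?_
  rw [reachable_eq_reflTransGen]
  exact Relation.reflTransGen_le_of_equivalence_of_le (reachable_is_equivalence _)
    fun _ _ => hT.reachable_sublevel

theorem IsMinSpanningTree.card_connectedComponent_sublevel [Fintype T.edgeSet]
    (hT : G.IsMinSpanningTree w T) (t : α) :
    Nat.card (G.sublevel w t).ConnectedComponent = #{e ∈ T.edgeFinset | t < w e} + 1 := by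
  have hforest := IsAcyclic.card_connectedComponent_add_card_edgeSet (H := T.sublevel w t)
    (hT.isTree.isAcyclic.anti sublevel_le)
  have htree : #T.edgeFinset + 1 = Nat.card V := by
    rw [edgeFinset_card, ← Nat.card_eq_fintype_card]
    exact (isTree_iff_connected_and_card.1 hT.isTree).2
  have hsublevel : Nat.card (T.sublevel w t).edgeSet = #{e ∈ T.edgeFinset | w e ≤ t} := by
    rw [edgeSet_sublevel, Nat.card_coe_set_eq, ← Set.ncard_coe_finset]
    congr 1
    ext e
    simp
  have hsplit := card_filter_add_card_filter_not (s := T.edgeFinset) (w · ≤ t)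
  simp only [not_le] at hsplit
  rw [← card_connectedComponent_eq_of_reachable_eq (hT.reachable_sublevel_eq t)]
  omega

end MinSpanningTree

end SimpleGraph

open SimpleGraph

theorem setIntegral_sum_indicator_Iio {ι : Type*} (s : Finset ι) {a : ι → ℝ} {A : Set ℝ}
    (ha : ∀ i ∈ s, 0 ≤ a i) (hA : ∀ i ∈ s, Set.Iio (a i) ∩ A = Set.Ioo 0 (a i)) :
    ∫ t in A, ∑ i ∈ s, (Set.Iio (a i)).indicator 1 t = ∑ i ∈ s, a i := by
  have hmeasure (i) (hi : i ∈ s) :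
      volume.restrict A (Set.Iio (a i)) = volume (Set.Ioo 0 (a i)) := by
    rw [Measure.restrict_apply measurableSet_Iio, hA i hi]
  rw [integral_finsetSum]
  · refine sum_congr rfl fun i hi => ?_
    rw [integral_indicator_one measurableSet_Iio, measureReal_def, hmeasure i hi,
      Real.volume_Ioo, sub_zero, ENNReal.toReal_ofReal (ha i hi)]
  · intro i hi
    refine IntegrableOn.integrable_indicator (integrableOn_const ?_) measurableSet_Iio
    rw [hmeasure i hi]
    exact measure_Ioo_lt_top.ne

theorem stmt_0_general {V : Type*} [Fintype V]
    (G : SimpleGraph V)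
    (w : Sym2 V → ℝ) (hw : ∀ e ∈ G.edgeSet, 0 < w e)
    (W : ℝ)
    (hW : IsLeast {x : ℝ | ∃ T : SimpleGraph V, T ≤ G ∧ T.IsTree ∧
      x = ∑ᶠ e ∈ T.edgeSet, w e} W)
    (N : ℝ → ℕ)
    (hN : ∀ t : ℝ, N t = Nat.card
      (SimpleGraph.ConnectedComponent
        (SimpleGraph.fromEdgeSet {e : Sym2 V | e ∈ G.edgeSet ∧ w e ≤ t}))) :
    (∀ t : ℝ, sSup (w '' G.edgeSet) ≤ t → (N t : ℝ) - 1 = 0) ∧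
    W = ∫ t in Set.Ioi (0:ℝ), ((N t : ℝ) - 1) ∧
    W = ∫ t in Set.Ioc (0:ℝ) (sSup (w '' G.edgeSet)), ((N t : ℝ) - 1) := by
  classical
  obtain ⟨T, ⟨hTG, hT, rfl⟩⟩ := hW.1
  have hMST : G.IsMinSpanningTree w T := ⟨hTG, hT, fun T' hT'G hT' => hW.2 ⟨T', hT'G, hT', rfl⟩⟩
  have hTG' (e) (he : e ∈ T.edgeFinset) : e ∈ G.edgeSet := edgeSet_mono hTG (mem_edgeFinset.1 he)
  have hwM (e) (he : e ∈ T.edgeFinset) : w e ≤ sSup (w '' G.edgeSet) :=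
    le_csSup (G.edgeSet.toFinite.image w).bddAbove ⟨e, hTG' e he, rfl⟩
  have hNt (t : ℝ) : (N t : ℝ) - 1 = ∑ e ∈ T.edgeFinset, (Set.Iio (w e)).indicator 1 t := by
    rw [(hN t).trans (hMST.card_connectedComponent_sublevel t)]
    simp [Set.indicator_apply, sum_boole]
  rw [← T.coe_edgeFinset, finsum_mem_coe_finset]
  simp_rw [hNt]
  refine ⟨fun t ht => sum_eq_zero fun e he => ?_, ?_, ?_⟩
  · exact Set.indicator_of_notMem (not_lt.2 ((hwM e he).trans ht)) (1 : ℝ → ℝ)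
  · refine (setIntegral_sum_indicator_Iio _ (fun e he => (hw e (hTG' e he)).le) fun e _ => ?_).symm
    exact Set.Iio_inter_Ioi
  · refine (setIntegral_sum_indicator_Iio _ (fun e he => (hw e (hTG' e he)).le) fun e he => ?_).symm
    ext t
    simp only [Set.mem_inter_iff, Set.mem_Iio, Set.mem_Ioc, Set.mem_Ioo]
    grind [hwM e he]

/-- For a finite connected weighted graph `G` with positive edge weights `w`,
the weight `W` of a minimum spanning tree equals `∫₀^∞ (N(G,t) − 1) dt`, where `N(G,t)` is the
number of connected components of the subgraph retaining only edges of weight `≤ t`; moreover the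
integrand vanishes for `t ≥ max_e w_e`, so the integral may be taken over `(0, max_e w_e]`. -/
theorem stmt_0 {V : Type*} [Fintype V] [Nonempty V]
    (G : SimpleGraph V) (hG : G.Connected)
    (w : Sym2 V → ℝ) (hw : ∀ e ∈ G.edgeSet, 0 < w e)
    (W : ℝ)
    (hW : IsLeast {x : ℝ | ∃ T : SimpleGraph V, T ≤ G ∧ T.IsTree ∧
      x = ∑ᶠ e ∈ T.edgeSet, w e} W)
    (N : ℝ → ℕ)
    (hN : ∀ t : ℝ, N t = Nat.card
      (SimpleGraph.ConnectedComponent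
        (SimpleGraph.fromEdgeSet {e : Sym2 V | e ∈ G.edgeSet ∧ w e ≤ t}))) :
    (∀ t : ℝ, sSup (w '' G.edgeSet) ≤ t → (N t : ℝ) - 1 = 0) ∧
    W = ∫ t in Set.Ioi (0:ℝ), ((N t : ℝ) - 1) ∧
    W = ∫ t in Set.Ioc (0:ℝ) (sSup (w '' G.edgeSet)), ((N t : ℝ) - 1) :=
  stmt_0_general G w hw W hW N hN
end

section
/- Let λ ≥ 0 and let BP(λ) denote a Galton–Watson branching process with Poisson(λ) offspring distribution, started from one individual, with total population |BP(λ)|. Then there exists a constant C' (independent of λ) such that P(|BP(λ)| < ∞) ≤ C' e^{−λ} for all λ ≥ 0. -/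
open Real

private lemma xexp_le (x : ℝ) (hx : 0 ≤ x) : x * Real.exp (-x) ≤ Real.exp (-1) := by
  have h : x ≤ Real.exp (x - 1) := by
    have := Real.add_one_le_exp (x - 1); linarith
  calc x * Real.exp (-x) ≤ Real.exp (x - 1) * Real.exp (-x) :=
        mul_le_mul_of_nonneg_right h (Real.exp_nonneg _)
    _ = Real.exp (-1) := by rw [← Real.exp_add]; ring_nf

/-- There is a constant `C'` (independent of `λ`) such that the extinction
probability of a Galton–Watson process with `Poisson(λ)` offspring, given by the Borel
distribution formula `P(|BP(λ)| < ∞) = ∑_{j≥1} e^{−λj}(λj)^{j−1}/j!`, is at most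
`C' e^{−λ}` for all `λ ≥ 0`. -/
theorem stmt_2 : ∃ C' : ℝ, 0 < C' ∧ ∀ lam : ℝ, 0 ≤ lam →
    (∑' j : ℕ, Real.exp (-(lam * ((j : ℝ) + 1))) * (lam * ((j : ℝ) + 1)) ^ j
        / (Nat.factorial (j + 1)))
      ≤ C' * Real.exp (-lam) := by
  obtain ⟨a, ha, hst⟩ := Stirling.stirlingSeq'_bounded_by_pos_constant
  set g : ℕ → ℝ := fun j =>
      Real.exp 1 / (a * Real.sqrt 2) * (1 / ((j : ℝ) + 1) ^ ((3 : ℝ) / 2)) with hg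
  have hgnonneg : ∀ j, 0 ≤ g j := by
    intro j
    have h2 : (0:ℝ) < Real.sqrt 2 := Real.sqrt_pos.2 (by norm_num)
    have : (0:ℝ) ≤ ((j:ℝ)+1) ^ ((3:ℝ)/2) := Real.rpow_nonneg (by positivity) _
    positivity
  have hgsum : Summable g := by
    apply Summable.mul_left
    have h1 : Summable (fun n : ℕ => 1 / (n : ℝ) ^ ((3 : ℝ) / 2)) :=
      Real.summable_one_div_nat_rpow.2 (by norm_num)
    have h2 := (summable_nat_add_iff 1).2 h1
    exact h2.congr (by intro n; push_cast; norm_num)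
  -- key per-term bound
  have key : ∀ lam : ℝ, 0 ≤ lam → ∀ j : ℕ,
      Real.exp (-(lam * ((j : ℝ) + 1))) * (lam * ((j : ℝ) + 1)) ^ j
        / (Nat.factorial (j + 1)) ≤ Real.exp (-lam) * g j := by
    intro lam hlam j
    set m : ℝ := (j : ℝ) + 1 with hm
    have hmpos : (0:ℝ) < m := by positivity
    have hfac : (0:ℝ) < (Nat.factorial (j+1) : ℝ) := by positivity
    -- step 1: LHS = exp(-lam) * (m * (lam * exp(-lam)))^j / (j+1)!
    have step1 : Real.exp (-(lam * m)) * (lam * m) ^ j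
        = Real.exp (-lam) * (m * (lam * Real.exp (-lam))) ^ j := by
      rw [mul_pow m, mul_pow lam]
      have : Real.exp (-(lam * m)) = Real.exp (-lam) * Real.exp (-lam) ^ j := by
        rw [← Real.exp_nat_mul, ← Real.exp_add]
        congr 1
        rw [hm]; push_cast; ring
      rw [this]; ring
    -- step 2: (m * (lam * exp(-lam)))^j ≤ (m * exp(-1))^j
    have step2 : (m * (lam * Real.exp (-lam))) ^ j ≤ (m * Real.exp (-1)) ^ j := by
      apply pow_le_pow_left₀
      · positivity
      · exact mul_le_mul_of_nonneg_left (xexp_le lam hlam) hmpos.le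
    -- step 3 : Stirling lower bound on factorial
    have hstir := hst j
    rw [Stirling.stirlingSeq, le_div_iff₀ (by positivity)] at hstir
    -- hstir : a * (√(2*(j+1)) * ((j+1)/e)^(j+1)) ≤ (j+1)!
    have hcast : ((j+1 : ℕ) : ℝ) = m := by rw [hm]; push_cast; ring
    rw [hcast] at hstir
    have hD : (0:ℝ) < a * (Real.sqrt (2 * m) * (m / Real.exp 1) ^ (j+1)) := by
      have h2m : (0:ℝ) < Real.sqrt (2*m) := Real.sqrt_pos.2 (by positivity)
      positivity
    have step3 : (m * Real.exp (-1)) ^ j / (Nat.factorial (j+1) : ℝ)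
        ≤ Real.exp 1 / (a * Real.sqrt 2) * (1 / m ^ ((3:ℝ)/2)) := by
      have hnum : (0:ℝ) ≤ (m * Real.exp (-1)) ^ j := by positivity
      have h1 : (m * Real.exp (-1)) ^ j / (Nat.factorial (j+1) : ℝ)
          ≤ (m * Real.exp (-1)) ^ j / (a * (Real.sqrt (2 * m) * (m / Real.exp 1) ^ (j+1))) :=
        div_le_div_of_nonneg_left hnum hD hstir
      refine h1.trans_eq ?_
      have hme : m * Real.exp (-1) = m / Real.exp 1 := by
        rw [Real.exp_neg, div_eq_mul_inv]
      have hsq : Real.sqrt (2 * m) = Real.sqrt 2 * Real.sqrt m :=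
        Real.sqrt_mul (by norm_num) m
      have hm32 : m ^ ((3:ℝ)/2) = m * Real.sqrt m := by
        have : ((3:ℝ)/2) = 1 + 1/2 := by norm_num
        rw [this, Real.rpow_add hmpos, Real.rpow_one, ← Real.sqrt_eq_rpow]
      rw [hme, hsq, hm32, pow_succ]
      have hsm : (0:ℝ) < Real.sqrt m := Real.sqrt_pos.2 hmpos
      have hpow : (0:ℝ) < (m / Real.exp 1) ^ j := by positivity
      field_simp
    calc Real.exp (-(lam * m)) * (lam * m) ^ j / (Nat.factorial (j+1) : ℝ)
        = Real.exp (-lam) * ((m * (lam * Real.exp (-lam))) ^ j / (Nat.factorial (j+1) : ℝ)) := by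
          rw [step1]; ring
      _ ≤ Real.exp (-lam) * ((m * Real.exp (-1)) ^ j / (Nat.factorial (j+1) : ℝ)) := by
          apply mul_le_mul_of_nonneg_left _ (Real.exp_nonneg _)
          exact (div_le_div_iff_of_pos_right hfac).2 step2
      _ ≤ Real.exp (-lam) * g j := by
          apply mul_le_mul_of_nonneg_left _ (Real.exp_nonneg _)
          exact step3
  refine ⟨∑' j, g j, ?_, ?_⟩
  · have hg0 : 0 < g 0 := by
      have h2 : (0:ℝ) < Real.sqrt 2 := Real.sqrt_pos.2 (by norm_num)
      have : ((0:ℕ):ℝ) + 1 = 1 := by norm_num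
      simp only [hg, this, Real.one_rpow]
      positivity
    exact Summable.tsum_pos hgsum hgnonneg 0 hg0
  · intro lam hlam
    have hsum2 : Summable (fun j => Real.exp (-lam) * g j) := hgsum.mul_left _
    have hsum1 : Summable (fun j : ℕ =>
        Real.exp (-(lam * ((j : ℝ) + 1))) * (lam * ((j : ℝ) + 1)) ^ j
          / (Nat.factorial (j + 1))) := by
      apply Summable.of_nonneg_of_le _ (key lam hlam) hsum2
      intro j
      positivity
    calc (∑' j : ℕ, Real.exp (-(lam * ((j : ℝ) + 1))) * (lam * ((j : ℝ) + 1)) ^ j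
          / (Nat.factorial (j + 1)))
        ≤ ∑' j, Real.exp (-lam) * g j := Summable.tsum_le_tsum (key lam hlam) hsum1 hsum2
      _ = (∑' j, g j) * Real.exp (-lam) := by rw [tsum_mul_left]; ring
end
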